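/- arXiv:1312.2780 — 2 statements merged into one kernel-verified Lean document; each statement's English description precedes it below -/
import Mathlib

section
/- There exists ε > 0 such that E[exp((α+ε) φ Y_0)] < ∞. -/
open MeasureTheory ProbabilityTheory Filter

/-- A measurable function `L : ℝ → ℝ` (used on `(0,∞)`) is slowly varying if it is
positive on `(0,∞)` and `L(t x)/L(x) → 1` as `x → ∞` for every `t > 0`. -/
def SlowlyVarying (L : ℝ → ℝ) : Prop :=
  Measurable L ∧ (∀ x > (0 : ℝ), 0 < L x) ∧
    ∀ t > (0 : ℝ), Tendsto (fun x => L (t * x) / L x) atTop (nhds 1)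

/-!
Put `s = (α + ε)|φ|`, which is `< α` for `ε = α(1 - |φ|)/2`. Since `L(2x)/L(x) → 1`, the tail
`x^{-α} L(x)` of `e^{η₀}` shrinks along `x₀ 2ⁿ` by a factor `q < 2^{-s}` per step, so summing
over dyadic shells gives `E e^{s η₀⁺} < ∞`; for `φ < 0`, (3.2) gives `E e^{s η₀⁻} < ∞` as well.
With `V = s η₀⁺` (resp. `s |η₀|`), convexity of `exp` yields
`E e^{(α+ε) φ^{j+1} η₀} ≤ 1 + |φ|^j E e^{V} ≤ exp (|φ|^j E e^{V})`, so by independence every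
partial sum of `(α + ε) φ Y₀` has exponential moment at most `exp (E e^{V} / (1 - |φ|))`, and
Fatou's lemma passes to the series.
-/

open Real Topology
open scoped ENNReal

namespace SlowlyVarying

variable {L : ℝ → ℝ}

theorem tendsto_rpow_mul_div (hL : SlowlyVarying L) (α : ℝ) {t : ℝ} (ht : 0 < t) :
    Tendsto (fun x => (t * x) ^ (-α) * L (t * x) / (x ^ (-α) * L x)) atTop (𝓝 (t ^ (-α))) := by
  have h := (hL.2.2 t ht).const_mul (t ^ (-α))
  rw [mul_one] at h
  refine h.congr' ?_
  filter_upwards [eventually_gt_atTop 0] with x hx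
  have := (hL.2.1 x hx).ne'
  have := (rpow_pos_of_pos hx (-α)).ne'
  rw [mul_rpow ht.le hx.le]
  field_simp

theorem exists_rpow_mul_le_geometric (hL : SlowlyVarying L) {α q : ℝ} (hq : 2 ^ (-α) < q) :
    ∃ x₀ ≥ (1 : ℝ), ∀ n : ℕ,
      (x₀ * 2 ^ n) ^ (-α) * L (x₀ * 2 ^ n) ≤ q ^ n * (x₀ ^ (-α) * L x₀) := by
  obtain ⟨x₁, hx₁⟩ := eventually_atTop.1
    ((hL.tendsto_rpow_mul_div α two_pos).eventually_lt_const hq)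
  have hq0 : 0 ≤ q := (rpow_pos_of_pos two_pos _).le.trans hq.le
  refine ⟨max x₁ 1, le_max_right _ _, fun n => ?_⟩
  induction n with
  | zero => simp
  | succ n ih =>
    set x := max x₁ 1 * 2 ^ n
    have hx : max x₁ 1 ≤ x := le_mul_of_one_le_right (by positivity) (one_le_pow₀ one_le_two)
    have hFx : 0 < x ^ (-α) * L x :=
      mul_pos (rpow_pos_of_pos (by positivity) _) (hL.2.1 x (by positivity))
    have hstep := (div_lt_iff₀ hFx).1 (hx₁ x ((le_max_left _ _).trans hx))
    calc (max x₁ 1 * 2 ^ (n + 1)) ^ (-α) * L (max x₁ 1 * 2 ^ (n + 1))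
        = (2 * x) ^ (-α) * L (2 * x) := by rw [show max x₁ 1 * 2 ^ (n + 1) = 2 * x by ring]
      _ ≤ q * (x ^ (-α) * L x) := hstep.le
      _ ≤ q ^ (n + 1) * (max x₁ 1 ^ (-α) * L (max x₁ 1)) := by
        rw [pow_succ, mul_comm _ q, mul_assoc]
        exact mul_le_mul_of_nonneg_left ih hq0

end SlowlyVarying

theorem exists_two_pow_mul_lt_le {x₀ z : ℝ} (hx₀ : 0 < x₀) (hz : x₀ < z) :
    ∃ n : ℕ, x₀ * 2 ^ n < z ∧ z ≤ x₀ * 2 ^ (n + 1) := by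
  obtain ⟨m, hm₁, hm₂⟩ := exists_mem_Ioc_zpow (div_pos (hx₀.trans hz) hx₀) one_lt_two
  have hm : 0 ≤ m := by
    by_contra! h
    have := zpow_le_one_of_nonpos₀ (one_le_two : (1 : ℝ) ≤ 2) (show m + 1 ≤ 0 by omega)
    have := (one_lt_div hx₀).2 hz
    linarith
  lift m to ℕ using hm
  rw [zpow_natCast] at hm₁
  rw [show (m : ℤ) + 1 = ((m + 1 : ℕ) : ℤ) by push_cast; rfl, zpow_natCast] at hm₂
  refine ⟨m, ?_, ?_⟩
  · simpa [lt_div_iff₀' hx₀] using hm₁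
  · simpa [div_le_iff₀' hx₀] using hm₂

theorem exp_mul_le_one_add_mul_exp {θ a : ℝ} (h₀ : 0 ≤ θ) (h₁ : θ ≤ 1) :
    exp (θ * a) ≤ 1 + θ * exp a := by
  have h := convexOn_exp.2 (Set.mem_univ 0) (Set.mem_univ a) (sub_nonneg.2 h₁) h₀ (by ring)
  simp only [smul_eq_mul, mul_zero, zero_add, exp_zero, mul_one] at h
  linarith

theorem lt_exp_max_zero_iff {x y : ℝ} (hx : 1 ≤ x) : x < exp (max y 0) ↔ x < exp y := by
  rw [exp_monotone.map_max, exp_zero, lt_max_iff, or_iff_left hx.not_gt]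

theorem mul_pow_mul_le_abs_pow_mul (b φ : ℝ) (j : ℕ) (x : ℝ) :
    b * φ ^ j * x ≤ |φ| ^ j * (|b| * |x|) :=
  (le_abs_self _).trans_eq (by rw [abs_mul, abs_mul, abs_pow]; ring)

theorem mul_pow_mul_le_pow_mul_max {b φ : ℝ} (hb : 0 ≤ b) (hφ : 0 ≤ φ) (j : ℕ) (x : ℝ) :
    b * φ ^ j * x ≤ φ ^ j * (b * max x 0) :=
  (mul_le_mul_of_nonneg_left (le_max_left x 0) (by positivity)).trans_eq (by ring)

section

variable {Ω : Type*}

theorem ofReal_exp_mul_le_add_tsum_indicator {X : Ω → ℝ} {s x₀ : ℝ} (hs : 0 ≤ s) (hx₀ : 0 < x₀)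
    (ω : Ω) :
    ENNReal.ofReal (exp (s * X ω)) ≤ ENNReal.ofReal (x₀ ^ s) +
      ∑' n : ℕ, {ω | x₀ * 2 ^ n < exp (X ω)}.indicator
        (fun _ => ENNReal.ofReal ((x₀ * 2 ^ (n + 1)) ^ s)) ω := by
  rw [mul_comm, exp_mul]
  rcases le_or_gt (exp (X ω)) x₀ with h | h
  · exact le_add_right (ENNReal.ofReal_le_ofReal (rpow_le_rpow (exp_pos _).le h hs))
  · obtain ⟨n, hn₁, hn₂⟩ := exists_two_pow_mul_lt_le hx₀ h
    refine le_add_left (le_trans ?_ (ENNReal.le_tsum n))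
    rw [Set.indicator_of_mem (by exact hn₁)]
    exact ENNReal.ofReal_le_ofReal (rpow_le_rpow (exp_pos _).le hn₂ hs)

variable [MeasurableSpace Ω] {μ : Measure Ω}

theorem integrable_exp_mul_of_tail_le_geometric [IsFiniteMeasure μ] {X : Ω → ℝ}
    (hX : Measurable X) {s x₀ C q : ℝ} (hs : 0 ≤ s) (hx₀ : 0 < x₀) (hq0 : 0 ≤ q)
    (hq : 2 ^ s * q < 1)
    (htail : ∀ n : ℕ, (μ {ω | x₀ * 2 ^ n < exp (X ω)}).toReal ≤ C * q ^ n) :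
    Integrable (fun ω => exp (s * X ω)) μ := by
  have hC : 0 ≤ C := by simpa using ENNReal.toReal_nonneg.trans (htail 0)
  have hmeas : ∀ n : ℕ, MeasurableSet {ω | x₀ * 2 ^ n < exp (X ω)} :=
    fun n => measurableSet_lt measurable_const hX.exp
  have hterm : ∀ n : ℕ,
      (x₀ * 2 ^ (n + 1)) ^ s * (C * q ^ n) = C * (2 * x₀) ^ s * (2 ^ s * q) ^ n := by
    intro n
    rw [show x₀ * 2 ^ (n + 1) = 2 * x₀ * 2 ^ n by ring, mul_rpow (by positivity) (by positivity),
      ← rpow_pow_comm zero_le_two]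
    ring
  have hsum : Summable fun n : ℕ => (x₀ * 2 ^ (n + 1)) ^ s * (C * q ^ n) := by
    simp_rw [hterm]
    exact (summable_geometric_of_lt_one (by positivity) hq).mul_left _
  refine ⟨(hX.const_mul s).exp.aestronglyMeasurable, ?_⟩
  rw [hasFiniteIntegral_iff_ofReal (ae_of_all _ fun ω => (exp_pos _).le)]
  calc ∫⁻ ω, ENNReal.ofReal (exp (s * X ω)) ∂μ
      ≤ ∫⁻ ω, (ENNReal.ofReal (x₀ ^ s) + ∑' n : ℕ, {ω | x₀ * 2 ^ n < exp (X ω)}.indicator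
          (fun _ => ENNReal.ofReal ((x₀ * 2 ^ (n + 1)) ^ s)) ω) ∂μ :=
        lintegral_mono (ofReal_exp_mul_le_add_tsum_indicator hs hx₀)
    _ = ENNReal.ofReal (x₀ ^ s) * μ Set.univ +
          ∑' n : ℕ, ENNReal.ofReal ((x₀ * 2 ^ (n + 1)) ^ s) * μ {ω | x₀ * 2 ^ n < exp (X ω)} := by
        rw [lintegral_add_left measurable_const, lintegral_const,
          lintegral_tsum fun n => (measurable_const.indicator (hmeas n)).aemeasurable]
        simp_rw [lintegral_indicator_const (hmeas _)]
    _ ≤ ENNReal.ofReal (x₀ ^ s) * μ Set.univ +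
          ∑' n : ℕ, ENNReal.ofReal ((x₀ * 2 ^ (n + 1)) ^ s * (C * q ^ n)) := by
        gcongr with n
        rw [ENNReal.ofReal_mul (by positivity), ← ENNReal.ofReal_toReal (measure_ne_top μ _)]
        gcongr
        exact htail n
    _ < ⊤ := by
        rw [← ENNReal.ofReal_tsum_of_nonneg (fun n => by positivity) hsum]
        exact ENNReal.add_lt_top.2 ⟨ENNReal.mul_lt_top ENNReal.ofReal_lt_top
          (measure_lt_top μ _), ENNReal.ofReal_lt_top⟩

theorem SlowlyVarying.integrable_exp_mul_of_tail_le {L : ℝ → ℝ} (hL : SlowlyVarying L)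
    [IsFiniteMeasure μ] {X : Ω → ℝ} (hX : Measurable X) {α s C : ℝ} (hs₀ : 0 ≤ s) (hs : s < α)
    (htail : ∀ x ≥ (1 : ℝ), (μ {ω | x < exp (X ω)}).toReal ≤ C * (x ^ (-α) * L x)) :
    Integrable (fun ω => exp (s * X ω)) μ := by
  have hC : 0 ≤ C := nonneg_of_mul_nonneg_left (ENNReal.toReal_nonneg.trans (htail 1 le_rfl))
    (by simpa using hL.2.1 1 one_pos)
  obtain ⟨q, hαq, hqs⟩ := exists_between
    (rpow_lt_rpow_of_exponent_lt one_lt_two (neg_lt_neg hs) : (2 : ℝ) ^ (-α) < 2 ^ (-s))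
  obtain ⟨x₀, hx₀, hgeom⟩ := hL.exists_rpow_mul_le_geometric hαq
  refine integrable_exp_mul_of_tail_le_geometric (C := C * (x₀ ^ (-α) * L x₀)) (q := q) hX hs₀
    (zero_lt_one.trans_le hx₀) ((rpow_pos_of_pos two_pos _).le.trans hαq.le) ?_ fun n => ?_
  · calc (2 : ℝ) ^ s * q < 2 ^ s * 2 ^ (-s) := by gcongr
      _ = 1 := by rw [← rpow_add two_pos, add_neg_cancel, rpow_zero]
  · calc (μ {ω | x₀ * 2 ^ n < exp (X ω)}).toReal
        ≤ C * ((x₀ * 2 ^ n) ^ (-α) * L (x₀ * 2 ^ n)) :=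
          htail _ (one_le_mul_of_one_le_of_one_le hx₀ (one_le_pow₀ one_le_two))
      _ ≤ C * (q ^ n * (x₀ ^ (-α) * L x₀)) := mul_le_mul_of_nonneg_left (hgeom n) hC
      _ = C * (x₀ ^ (-α) * L x₀) * q ^ n := by ring

theorem integrable_exp_mul_abs {f : Ω → ℝ} (hf : Measurable f) {s : ℝ}
    (h₁ : Integrable (fun ω => exp (s * max (f ω) 0)) μ)
    (h₂ : Integrable (fun ω => exp (s * max (-f ω) 0)) μ) :
    Integrable (fun ω => exp (s * |f ω|)) μ := by
  refine (h₁.add h₂).mono' (hf.abs.const_mul s).exp.aestronglyMeasurable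
    (ae_of_all _ fun ω => ?_)
  rw [norm_of_nonneg (exp_pos _).le, Pi.add_apply]
  rcases le_total 0 (f ω) with h | h
  · rw [abs_of_nonneg h, max_eq_left h]
    linarith [exp_pos (s * max (-f ω) 0)]
  · rw [abs_of_nonpos h, max_eq_left (neg_nonneg.2 h)]
    linarith [exp_pos (s * max (f ω) 0)]

theorem lintegral_exp_le_exp_mul_integral [IsProbabilityMeasure μ] {Y V : Ω → ℝ}
    (hV : Integrable (fun ω => exp (V ω)) μ) {θ : ℝ} (hθ₀ : 0 ≤ θ) (hθ₁ : θ ≤ 1)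
    (hYV : ∀ ω, Y ω ≤ θ * V ω) :
    ∫⁻ ω, ENNReal.ofReal (exp (Y ω)) ∂μ ≤ ENNReal.ofReal (exp (θ * ∫ ω, exp (V ω) ∂μ)) := by
  have hθV : Integrable (fun ω => θ * exp (V ω)) μ := hV.const_mul θ
  calc ∫⁻ ω, ENNReal.ofReal (exp (Y ω)) ∂μ
      ≤ ∫⁻ ω, ENNReal.ofReal (1 + θ * exp (V ω)) ∂μ := lintegral_mono fun ω =>
        ENNReal.ofReal_le_ofReal
          ((exp_le_exp.2 (hYV ω)).trans (exp_mul_le_one_add_mul_exp hθ₀ hθ₁))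
    _ = ENNReal.ofReal (∫ ω, (1 + θ * exp (V ω)) ∂μ) :=
        (ofReal_integral_eq_lintegral_ofReal ((integrable_const 1).add hθV)
          (ae_of_all _ fun ω => add_nonneg zero_le_one (mul_nonneg hθ₀ (exp_pos _).le))).symm
    _ = ENNReal.ofReal (1 + θ * ∫ ω, exp (V ω) ∂μ) := by
        rw [integral_add (integrable_const 1) hθV, integral_const_mul]
        simp
    _ ≤ ENNReal.ofReal (exp (θ * ∫ ω, exp (V ω) ∂μ)) :=
        ENNReal.ofReal_le_ofReal (by linarith [add_one_le_exp (θ * ∫ ω, exp (V ω) ∂μ)])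

theorem lintegral_exp_sum_le_of_iIndepFun {ι : Type*} {X : ι → Ω → ℝ}
    (hX : ∀ i, Measurable (X i)) (hind : iIndepFun X μ) {a : ι → ℝ}
    (ha : ∀ i, ∫⁻ ω, ENNReal.ofReal (exp (X i ω)) ∂μ ≤ ENNReal.ofReal (exp (a i)))
    (s : Finset ι) :
    ∫⁻ ω, ENNReal.ofReal (exp (∑ i ∈ s, X i ω)) ∂μ ≤ ENNReal.ofReal (exp (∑ i ∈ s, a i)) := by
  have hG : iIndepFun (fun i ω => ENNReal.ofReal (exp (X i ω))) μ :=
    hind.comp (fun _ x => ENNReal.ofReal (exp x)) fun _ => measurable_exp.ennreal_ofReal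
  simp_rw [exp_sum, ENNReal.ofReal_prod_of_nonneg fun _ _ => (exp_pos _).le]
  rw [lintegral_prod_eq_prod_lintegral_of_indepFun s _ hG fun i => (hX i).exp.ennreal_ofReal]
  exact Finset.prod_le_prod' fun i _ => ha i

theorem integrable_exp_tsum_of_lintegral_exp_sum_le [IsFiniteMeasure μ] {X : ℕ → Ω → ℝ}
    (hX : ∀ j, Measurable (X j)) {B : ℝ≥0∞} (hB : B ≠ ⊤)
    (h : ∀ n, ∫⁻ ω, ENNReal.ofReal (exp (∑ j ∈ Finset.range n, X j ω)) ∂μ ≤ B) :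
    Integrable (fun ω => exp (∑' j, X j ω)) μ := by
  set F : ℕ → Ω → ℝ≥0∞ := fun n ω => ENNReal.ofReal (exp (∑ j ∈ Finset.range n, X j ω))
  -- the `+ 1` covers the points where the series diverges, and `tsum` is `0`
  have hpt : ∀ ω, ENNReal.ofReal (exp (∑' j, X j ω)) ≤ liminf (fun n => F n ω) atTop + 1 := by
    intro ω
    by_cases hsum : Summable fun j => X j ω
    · refine le_self_add.trans_eq' (Tendsto.liminf_eq ?_)
      exact (ENNReal.continuous_ofReal.tendsto _).comp
        ((continuous_exp.tendsto _).comp hsum.hasSum.tendsto_sum_nat)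
    · rw [tsum_eq_zero_of_not_summable hsum, exp_zero, ENNReal.ofReal_one]
      exact le_add_self
  refine ⟨(Measurable.tsum hX).exp.aestronglyMeasurable, ?_⟩
  rw [hasFiniteIntegral_iff_ofReal (ae_of_all _ fun ω => (exp_pos _).le)]
  calc ∫⁻ ω, ENNReal.ofReal (exp (∑' j, X j ω)) ∂μ
      ≤ ∫⁻ ω, liminf (fun n => F n ω) atTop + 1 ∂μ := lintegral_mono hpt
    _ = ∫⁻ ω, liminf (fun n => F n ω) atTop ∂μ + μ Set.univ := by
        rw [lintegral_add_right _ measurable_const, lintegral_const, one_mul]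
    _ ≤ liminf (fun n => ∫⁻ ω, F n ω ∂μ) atTop + μ Set.univ := by
        gcongr
        exact lintegral_liminf_le fun n =>
          (Finset.measurable_sum _ fun j _ => hX j).exp.ennreal_ofReal
    _ ≤ B + μ Set.univ := by
        gcongr
        exact liminf_le_of_frequently_le' (Frequently.of_forall h)
    _ < ⊤ := ENNReal.add_lt_top.2 ⟨hB.lt_top, measure_lt_top μ _⟩

theorem integrable_exp_mul_tsum_of_iid {η : ℤ → Ω → ℝ} (hη : ∀ t, Measurable (η t))
    (hind : iIndepFun η μ) (hident : ∀ t, IdentDistrib (η t) (η 0) μ μ) {φ b : ℝ}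
    (hφ : |φ| < 1) {V : ℝ → ℝ} (hV : Integrable (fun ω => exp (V (η 0 ω))) μ)
    (hbV : ∀ (j : ℕ) (x : ℝ), b * φ ^ j * x ≤ |φ| ^ j * V x) (t : ℤ) :
    Integrable (fun ω => exp (b * ∑' j : ℕ, φ ^ j * η (t - j) ω)) μ := by
  have := hind.isProbabilityMeasure
  set M := ∫ ω, exp (V (η 0 ω)) ∂μ
  set X : ℕ → Ω → ℝ := fun j ω => b * φ ^ j * η (t - j) ω
  have hX : ∀ j, Measurable (X j) := fun j => (hη _).const_mul _
  have hXind : iIndepFun X μ :=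
    (hind.precomp (sub_right_injective.comp Nat.cast_injective)).comp
      (fun j x => b * φ ^ j * x) fun j => measurable_const_mul _
  have hXbound : ∀ j, ∫⁻ ω, ENNReal.ofReal (exp (X j ω)) ∂μ
      ≤ ENNReal.ofReal (exp (|φ| ^ j * M)) := by
    intro j
    refine ((hident _).comp
      (measurable_const_mul (b * φ ^ j)).exp.ennreal_ofReal).lintegral_eq.le.trans ?_
    exact lintegral_exp_le_exp_mul_integral hV (pow_nonneg (abs_nonneg φ) j)
      (pow_le_one₀ (abs_nonneg φ) hφ.le) fun ω => hbV j (η 0 ω)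
  have hsum : Summable fun j : ℕ => |φ| ^ j * M :=
    (summable_geometric_of_lt_one (abs_nonneg φ) hφ).mul_right M
  have hM : 0 ≤ M := integral_nonneg fun ω => (exp_pos _).le
  simp_rw [← tsum_mul_left, ← mul_assoc]
  refine integrable_exp_tsum_of_lintegral_exp_sum_le hX ENNReal.ofReal_ne_top fun n =>
    (lintegral_exp_sum_le_of_iIndepFun hX hXind hXbound _).trans
      (ENNReal.ofReal_le_ofReal (exp_le_exp.2 (hsum.sum_le_tsum _ fun j _ => ?_)))
  positivity

end

theorem exists_moment_exp_phi_Y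
    {Ω : Type*} [MeasureSpace Ω] [IsProbabilityMeasure (ℙ : Measure Ω)]
    (η : ℤ → Ω → ℝ) (hηmeas : ∀ t, Measurable (η t))
    (hηindep : iIndepFun η ℙ)
    (hηident : ∀ t, IdentDistrib (η t) (η 0) ℙ ℙ)
    (φ : ℝ) (hφ : φ ∈ Set.Ioo (-1 : ℝ) 1)
    (Y : ℤ → Ω → ℝ)
    (hY : ∀ t ω, Y t ω = ∑' j : ℕ, φ ^ j * η (t - (j : ℤ)) ω)
    (α : ℝ) (hα : 0 < α) (L : ℝ → ℝ) (hL : SlowlyVarying L)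
    (h31 : ∀ x > (0 : ℝ), (ℙ {ω | x < Real.exp (η 0 ω)}).toReal = x ^ (-α) * L x)
    (h32 : φ < 0 → ∃ c > (0 : ℝ), ∀ x ≥ (1 : ℝ),
      (ℙ {ω | x < Real.exp (max (-η 0 ω) 0)}).toReal
        ≤ c * (ℙ {ω | x < Real.exp (η 0 ω)}).toReal) :
    ∃ ε > (0 : ℝ), Integrable (fun ω => Real.exp ((α + ε) * φ * Y 0 ω)) ℙ := by
  have hφ₁ : |φ| < 1 := abs_lt.2 hφ
  set ε := α * (1 - |φ|) / 2
  have hε : 0 < ε := div_pos (mul_pos hα (sub_pos.2 hφ₁)) two_pos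
  set b := (α + ε) * φ with hb
  have hbα : |b| < α := by
    rw [hb, abs_mul, abs_of_pos (add_pos hα hε)]
    simp only [ε]
    linarith [mul_pos (mul_pos hα (sub_pos.2 hφ₁)) (sub_pos.2 (hφ₁.trans one_lt_two))]
  have hpos : Integrable (fun ω => exp (|b| * max (η 0 ω) 0)) ℙ :=
    hL.integrable_exp_mul_of_tail_le ((hηmeas 0).max measurable_const) (abs_nonneg b) hbα
      (C := 1) fun x hx => by simp_rw [lt_exp_max_zero_iff hx, h31 x (by linarith), one_mul, le_rfl]
  obtain ⟨V, hV, hbV⟩ : ∃ V : ℝ → ℝ, Integrable (fun ω => exp (V (η 0 ω))) ℙ ∧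
      ∀ (j : ℕ) (x : ℝ), b * φ ^ j * x ≤ |φ| ^ j * V x := by
    rcases lt_or_ge φ 0 with hφ₀ | hφ₀
    · obtain ⟨c, -, hc⟩ := h32 hφ₀
      have hneg : Integrable (fun ω => exp (|b| * max (-η 0 ω) 0)) ℙ :=
        hL.integrable_exp_mul_of_tail_le ((hηmeas 0).neg.max measurable_const) (abs_nonneg b) hbα
          fun x hx => (hc x hx).trans_eq (by rw [h31 x (by linarith)])
      exact ⟨fun x => |b| * |x|, integrable_exp_mul_abs (hηmeas 0) hpos hneg,
        mul_pow_mul_le_abs_pow_mul b φ⟩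
    · have hb₀ : 0 ≤ b := mul_nonneg (add_pos hα hε).le hφ₀
      refine ⟨fun x => |b| * max x 0, hpos, fun j x => ?_⟩
      simpa only [abs_of_nonneg hφ₀, abs_of_nonneg hb₀] using mul_pow_mul_le_pow_mul_max hb₀ hφ₀ j x
  refine ⟨ε, hε, ?_⟩
  simp_rw [hY]
  exact integrable_exp_mul_tsum_of_iid hηmeas hηindep hηident hφ₁ hV hbV 0
end

section
/- For every integer d ≥ 2 and every δ > 0, lim_{n→∞} n P( |Z_i| e^{η_{i-1}} > δ a_n for all i = 1,…,d ) = 0; hence any vague limit of n P(a_n^{-1}(Z_1 e^{η_0},…,Z_d e^{η_{d-1}}) ∈ ·) must be concentrated on the coordinate axes. -/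
/-!
Write `x = δ aₙ` and `T` for the tail of `e^{η₀}`. On the event, either `|Z₁|` or `|Z₂|` exceeds
`x^{1/4}`, which by Markov's inequality has probability `O(x^{-m})` for every `m`, or both `e^{η₀}`
and `e^{η₁}` exceed `x^{3/4}`; these are independent copies, so this costs `T(x^{3/4})²`.
Since `n T(aₙ) → 1`, it remains to compare with `T`: monotonicity of `T` and
`T(2x)/T(x) → 2^{-α}` give the Potter-type bounds `T(x) = O(x^{-p})` for `p < α` and
`x^{-β} = O(T(x))` for `β > α`, and `T(x^{3/4})² = O(x^{-3p/2})` is `o(x^{-β})` once `β < 3p/2`.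
-/

open MeasureTheory ProbabilityTheory Filter

open Asymptotics Topology

theorem SlowlyVarying.tendsto_div_of_eq_rpow_mul {L T : ℝ → ℝ} (hL : SlowlyVarying L) {α : ℝ}
    (hT : ∀ x > 0, T x = x ^ (-α) * L x) {t : ℝ} (ht : 0 < t) :
    Tendsto (fun x => T (t * x) / T x) atTop (𝓝 (t ^ (-α))) := by
  have hlim := (hL.2.2 t ht).const_mul (t ^ (-α))
  rw [mul_one] at hlim
  refine hlim.congr' ?_
  filter_upwards [eventually_gt_atTop 0] with x hx
  have hLx := hL.2.1 x hx
  rw [hT x hx, hT (t * x) (by positivity), Real.mul_rpow ht.le hx.le]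
  field_simp

namespace Antitone

variable {T : ℝ → ℝ} {t x₀ : ℝ}

theorem le_mul_rpow_of_doubling (hT : Antitone T) (ht : 1 < t) (hx₀ : 0 < x₀) (hT₀ : 0 ≤ T x₀)
    {p : ℝ} (hp : 0 ≤ p)
    (h : ∀ x ≥ x₀, T (t * x) ≤ t ^ (-p) * T x) {x : ℝ} (hx : x₀ ≤ x) :
    T x ≤ T x₀ * (t * x₀) ^ p * x ^ (-p) := by
  obtain ⟨k, hk, hk'⟩ := exists_nat_pow_near ((one_le_div hx₀).2 hx) ht
  rw [le_div_iff₀ hx₀] at hk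
  rw [div_lt_iff₀ hx₀, pow_succ, mul_assoc] at hk'
  have hgeom : T (t ^ k * x₀) ≤ (t ^ (-p)) ^ k * T x₀ := by
    have hstep (j : ℕ) : T (t ^ (j + 1) * x₀) ≤ t ^ (-p) * T (t ^ j * x₀) := by
      rw [pow_succ, mul_comm _ t, mul_assoc]
      exact h _ (le_mul_of_one_le_left hx₀.le (one_le_pow₀ ht.le))
    simpa using le_geom (u := fun j => T (t ^ j * x₀)) (by positivity) k fun j _ => hstep j
  have hx0 : 0 < x := hx₀.trans_le hx
  calc T x ≤ T (t ^ k * x₀) := hT hk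
    _ ≤ (t ^ (-p)) ^ k * T x₀ := hgeom
    _ = T x₀ * (t ^ k) ^ (-p) := by rw [Real.rpow_pow_comm (by positivity)]; ring
    _ ≤ T x₀ * (x / (t * x₀)) ^ (-p) := by
        refine mul_le_mul_of_nonneg_left ?_ hT₀
        exact Real.rpow_le_rpow_of_nonpos (by positivity)
          ((div_le_iff₀ (by positivity)).2 hk'.le) (neg_nonpos.2 hp)
    _ = T x₀ * (t * x₀) ^ p * x ^ (-p) := by
        rw [Real.div_rpow hx0.le (by positivity), Real.rpow_neg (x := t * x₀) (by positivity),
          div_inv_eq_mul]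
        ring

theorem mul_rpow_le_of_doubling (hT : Antitone T) (ht : 1 < t) (hx₀ : 0 < x₀) (hT₀ : 0 ≤ T x₀)
    {β : ℝ} (hβ : 0 ≤ β)
    (h : ∀ x ≥ x₀, t ^ (-β) * T x ≤ T (t * x)) {x : ℝ} (hx : x₀ ≤ x) :
    T x₀ * (x₀ / t) ^ β * x ^ (-β) ≤ T x := by
  obtain ⟨k, hk, hk'⟩ := exists_nat_pow_near ((one_le_div hx₀).2 hx) ht
  rw [le_div_iff₀ hx₀] at hk
  rw [div_lt_iff₀ hx₀] at hk'
  have hgeom : (t ^ (-β)) ^ (k + 1) * T x₀ ≤ T (t ^ (k + 1) * x₀) := by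
    have hstep (j : ℕ) : t ^ (-β) * T (t ^ j * x₀) ≤ T (t ^ (j + 1) * x₀) := by
      rw [pow_succ, mul_comm _ t, mul_assoc]
      exact h _ (le_mul_of_one_le_left hx₀.le (one_le_pow₀ ht.le))
    simpa using geom_le (u := fun j => T (t ^ j * x₀)) (by positivity) (k + 1) fun j _ => hstep j
  have hx0 : 0 < x := hx₀.trans_le hx
  calc T x₀ * (x₀ / t) ^ β * x ^ (-β) = T x₀ * (t * x / x₀) ^ (-β) := by
        rw [Real.rpow_neg hx0.le, Real.rpow_neg (by positivity),
          Real.div_rpow hx₀.le (by positivity), Real.div_rpow (by positivity) hx₀.le,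
          Real.mul_rpow (by positivity) hx0.le]
        field_simp
    _ ≤ T x₀ * (t ^ (k + 1)) ^ (-β) := by
        refine mul_le_mul_of_nonneg_left
          (Real.rpow_le_rpow_of_nonpos (by positivity) ?_ (neg_nonpos.2 hβ)) hT₀
        rw [le_div_iff₀ hx₀, pow_succ]
        nlinarith
    _ = (t ^ (-β)) ^ (k + 1) * T x₀ := by rw [Real.rpow_pow_comm (by positivity)]; ring
    _ ≤ T (t ^ (k + 1) * x₀) := hgeom
    _ ≤ T x := hT hk'.le

theorem isBigO_rpow_neg_of_tendsto_div (hT : Antitone T) (hT0 : ∀ x, 0 ≤ T x) (ht : 1 < t) {α p : ℝ}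
    (h : Tendsto (fun x => T (t * x) / T x) atTop (𝓝 (t ^ (-α)))) (hp : 0 ≤ p) (hpα : p < α) :
    T =O[atTop] fun x => x ^ (-p) := by
  have hlt : t ^ (-α) < t ^ (-p) := Real.rpow_lt_rpow_of_exponent_lt ht (by linarith)
  obtain ⟨x₁, hx₁⟩ := eventually_atTop.1 (h.eventually (gt_mem_nhds hlt))
  set x₀ := max x₁ 1
  have hdoubling : ∀ x ≥ x₀, T (t * x) ≤ t ^ (-p) * T x := by
    intro x hx
    have hx0 : 0 < x := zero_lt_one.trans_le ((le_max_right _ _).trans hx)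
    rcases (hT0 x).eq_or_lt with hTx | hTx
    · rw [← hTx, mul_zero, hTx]
      exact hT (le_mul_of_one_le_left hx0.le ht.le)
    · exact ((div_lt_iff₀ hTx).1 (hx₁ x ((le_max_left _ _).trans hx))).le
  refine IsBigO.of_bound (T x₀ * (t * x₀) ^ p) ?_
  filter_upwards [eventually_ge_atTop x₀] with x hx
  have hx0 : 0 < x := zero_lt_one.trans_le ((le_max_right _ _).trans hx)
  rw [Real.norm_of_nonneg (hT0 x), Real.norm_of_nonneg (by positivity)]
  exact hT.le_mul_rpow_of_doubling ht (by positivity) (hT0 x₀) hp hdoubling hx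

theorem rpow_neg_isBigO_of_tendsto_div (hT : Antitone T) (hT0 : ∀ x, 0 ≤ T x) (ht : 1 < t) {α β : ℝ}
    (h : Tendsto (fun x => T (t * x) / T x) atTop (𝓝 (t ^ (-α)))) (hβ : 0 ≤ β) (hαβ : α < β) :
    (fun x => x ^ (-β)) =O[atTop] T := by
  have hlt : t ^ (-β) < t ^ (-α) := Real.rpow_lt_rpow_of_exponent_lt ht (by linarith)
  obtain ⟨x₁, hx₁⟩ := eventually_atTop.1 (h.eventually (lt_mem_nhds hlt))
  set x₀ := max x₁ 1
  have hpos : ∀ x ≥ x₀, 0 < T x := fun x hx => by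
    by_contra! hTx
    have := hx₁ x ((le_max_left _ _).trans hx)
    rw [le_antisymm hTx (hT0 x), div_zero] at this
    exact this.not_gt (by positivity)
  have hdoubling : ∀ x ≥ x₀, t ^ (-β) * T x ≤ T (t * x) := fun x hx =>
    ((lt_div_iff₀ (hpos x hx)).1 (hx₁ x ((le_max_left _ _).trans hx))).le
  have hc : 0 < T x₀ * (x₀ / t) ^ β := mul_pos (hpos x₀ le_rfl) (by positivity)
  refine IsBigO.of_bound (T x₀ * (x₀ / t) ^ β)⁻¹ ?_
  filter_upwards [eventually_ge_atTop x₀] with x hx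
  have hx0 : 0 < x := zero_lt_one.trans_le ((le_max_right _ _).trans hx)
  rw [Real.norm_of_nonneg (hT0 x), Real.norm_of_nonneg (by positivity), inv_mul_eq_div,
    le_div_iff₀ hc, mul_comm]
  exact hT.mul_rpow_le_of_doubling ht (by positivity) (hT0 x₀) hβ hdoubling hx

theorem tendsto_atTop_of_tendsto_natCast_mul (hT : Antitone T)
    (hpos : ∀ x > 0, 0 < T x) {a : ℕ → ℝ} {c : ℝ}
    (h : Tendsto (fun n : ℕ => (n : ℝ) * T (a n)) atTop (𝓝 c)) : Tendsto a atTop atTop := by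
  refine tendsto_atTop.2 fun b => ?_
  have hb : 0 < T (max b 1) := hpos _ (by positivity)
  filter_upwards [h.eventually (gt_mem_nhds (lt_add_one c)),
    (tendsto_natCast_atTop_atTop.atTop_mul_const hb).eventually_gt_atTop (c + 1)] with n hn hnb
  by_contra! hab
  exact (hn.trans hnb).not_ge
    (mul_le_mul_of_nonneg_left (hT (hab.le.trans (le_max_left b 1))) n.cast_nonneg)

end Antitone

theorem tail_isBigO_rpow_neg_of_integrable {Ω : Type*} [MeasurableSpace Ω] {μ : Measure Ω}
    [IsFiniteMeasure μ] {X : Ω → ℝ} {m : ℝ} (hm : 0 < m)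
    (hX : Integrable (fun ω => |X ω| ^ m) μ) :
    (fun y => μ.real {ω | y < |X ω|}) =O[atTop] fun y => y ^ (-m) := by
  refine IsBigO.of_bound (∫ ω, |X ω| ^ m ∂μ) ?_
  filter_upwards [eventually_gt_atTop 0] with y hy
  have hmarkov := mul_meas_ge_le_integral_of_nonneg
    (Eventually.of_forall fun ω => Real.rpow_nonneg (abs_nonneg (X ω)) m) hX (y ^ m)
  have hsub : {ω | y < |X ω|} ⊆ {ω | y ^ m ≤ |X ω| ^ m} := fun ω hω =>
    Real.rpow_le_rpow hy.le (le_of_lt hω) hm.le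
  rw [Real.norm_of_nonneg measureReal_nonneg, Real.norm_of_nonneg (by positivity),
    Real.rpow_neg hy.le, ← div_eq_mul_inv, le_div_iff₀ (by positivity), mul_comm]
  exact (mul_le_mul_of_nonneg_left (measureReal_mono hsub) (by positivity)).trans hmarkov

theorem Asymptotics.IsBigO.comp_mul_rpow {f : ℝ → ℝ} {m : ℝ}
    (hf : f =O[atTop] fun y => y ^ (-m)) {c θ : ℝ} (hc : 0 < c) (hθ : 0 < θ) :
    (fun y => f ((c * y) ^ θ)) =O[atTop] fun y => y ^ (-(θ * m)) := by
  have hlim : Tendsto (fun y => (c * y) ^ θ) atTop atTop :=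
    (tendsto_rpow_atTop hθ).comp (tendsto_id.const_mul_atTop hc)
  refine (hf.comp_tendsto hlim).trans ?_
  refine ((isBigO_refl (fun y : ℝ => y ^ (-(θ * m))) atTop).const_mul_left
    (c ^ (-(θ * m)))).congr' ?_ .rfl
  filter_upwards [eventually_ge_atTop 0] with y hy
  simp only [Function.comp_apply]
  rw [← Real.rpow_mul (by positivity), Real.mul_rpow hc.le hy, mul_neg]

theorem rpow_neg_isLittleO_rpow_neg {a b : ℝ} (hab : b < a) :
    (fun x : ℝ => x ^ (-a)) =o[atTop] fun x => x ^ (-b) := by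
  refine (isLittleO_iff_tendsto' ?_).2 ((tendsto_rpow_neg_atTop (sub_pos.2 hab)).congr' ?_)
  · filter_upwards [eventually_gt_atTop 0] with x hx h
    exact absurd h (Real.rpow_pos_of_pos hx _).ne'
  · filter_upwards [eventually_gt_atTop 0] with x hx
    rw [← Real.rpow_sub hx]
    ring_nf

theorem isLittleO_add_sq_of_rpow_bounds {T G : ℝ → ℝ} {p β m θ c : ℝ} (hc : 0 < c)
    (hθ : 0 < θ) (hθ1 : θ < 1) (hTp : T =O[atTop] fun x => x ^ (-p))
    (hTβ : (fun x => x ^ (-β)) =O[atTop] T) (hG : G =O[atTop] fun x => x ^ (-m))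
    (hβp : β < 2 * (θ * p)) (hβm : β < (1 - θ) * m) :
    (fun y => 2 * G ((c * y) ^ (1 - θ)) + T ((c * y) ^ θ) ^ 2) =o[atTop] T := by
  have hTsq : (fun y => T ((c * y) ^ θ) ^ 2) =O[atTop] fun y => y ^ (-(2 * (θ * p))) := by
    refine ((hTp.comp_mul_rpow hc hθ).pow 2).trans_eventuallyEq ?_
    filter_upwards [eventually_ge_atTop 0] with y hy
    rw [← Real.rpow_mul_natCast hy]
    ring_nf
  refine IsLittleO.add (IsLittleO.const_mul_left ?_ 2) ?_
  · exact ((hG.comp_mul_rpow hc (sub_pos.2 hθ1)).trans_isLittleO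
      (rpow_neg_isLittleO_rpow_neg hβm)).trans_isBigO hTβ
  · exact (hTsq.trans_isLittleO (rpow_neg_isLittleO_rpow_neg hβp)).trans_isBigO hTβ

theorem tendsto_natCast_mul_of_le_of_isLittleO {T N : ℝ → ℝ} {a P : ℕ → ℝ} {c : ℝ}
    (hTa : Tendsto (fun n : ℕ => (n : ℝ) * T (a n)) atTop (𝓝 c)) (ha : Tendsto a atTop atTop)
    (hN : N =o[atTop] T) (hP0 : ∀ n, 0 ≤ P n) (hPN : ∀ᶠ n in atTop, P n ≤ N (a n)) :
    Tendsto (fun n : ℕ => (n : ℝ) * P n) atTop (𝓝 0) := by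
  have hlim := hTa.mul (hN.tendsto_div_nhds_zero.comp ha)
  rw [mul_zero] at hlim
  refine squeeze_zero' (Eventually.of_forall fun n => mul_nonneg n.cast_nonneg (hP0 n)) ?_ hlim
  filter_upwards [hPN, ha.eventually hN.isBigO.eventually_mul_div_cancel] with n hPn hdiv
  calc (n : ℝ) * P n ≤ n * N (a n) := by gcongr
    _ = n * T (a n) * (N (a n) / T (a n)) := by
        simp only [Pi.mul_apply, Pi.div_apply] at hdiv
        rw [mul_assoc, mul_comm (T (a n)), hdiv]

theorem rpow_lt_of_lt_mul_of_le_rpow_one_sub {x a b θ : ℝ} (hx : 0 < x) (ha : 0 ≤ a)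
    (hax : a ≤ x ^ (1 - θ)) (h : x < a * b) : x ^ θ < b := by
  refine lt_of_mul_lt_mul_left ?_ ha
  calc a * x ^ θ ≤ x ^ (1 - θ) * x ^ θ := by gcongr
    _ = x := by rw [← Real.rpow_add hx]; simp
    _ < a * b := h

section Exceedance

variable {Ω : Type*} [MeasurableSpace Ω] {μ : Measure Ω} [IsFiniteMeasure μ] {Z : ℤ → Ω → ℝ}

theorem measureReal_consecutive_exceedances_le (hZindep : iIndepFun Z μ)
    (hZident : ∀ t, IdentDistrib (Z t) (Z 0) μ μ) {F : ℝ → ℝ} (hF : Measurable F) {d : ℕ}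
    (hd : 2 ≤ d) (θ : ℝ) {x : ℝ} (hx : 0 < x) :
    μ.real {ω | ∀ i : ℤ, 1 ≤ i → i ≤ (d : ℤ) → x < |Z i ω| * F (Z (i - 1) ω)} ≤
      2 * μ.real {ω | x ^ (1 - θ) < |Z 0 ω|} + μ.real {ω | x ^ θ < F (Z 0 ω)} ^ 2 := by
  have hZtail (i : ℤ) :
      μ.real {ω | x ^ (1 - θ) < |Z i ω|} = μ.real {ω | x ^ (1 - θ) < |Z 0 ω|} :=
    congrArg ENNReal.toReal <| (hZident i).measure_mem_eq (s := {z | x ^ (1 - θ) < |z|})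
      (measurableSet_lt measurable_const measurable_abs)
  have hFtail : μ.real {ω | x ^ θ < F (Z 1 ω)} = μ.real {ω | x ^ θ < F (Z 0 ω)} :=
    congrArg ENNReal.toReal <| (hZident 1).measure_mem_eq (s := {z | x ^ θ < F z})
      (measurableSet_lt measurable_const hF)
  have hindep : μ.real ({ω | x ^ θ < F (Z 0 ω)} ∩ {ω | x ^ θ < F (Z 1 ω)}) =
      μ.real {ω | x ^ θ < F (Z 0 ω)} * μ.real {ω | x ^ θ < F (Z 1 ω)} := by
    have := ((hZindep.indepFun (by decide : (0 : ℤ) ≠ 1)).comp hF hF).measure_inter_preimage_eq_mul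
      (Set.Ioi (x ^ θ)) (Set.Ioi (x ^ θ)) measurableSet_Ioi measurableSet_Ioi
    exact (congrArg ENNReal.toReal this).trans ENNReal.toReal_mul
  have hsub : {ω | ∀ i : ℤ, 1 ≤ i → i ≤ (d : ℤ) → x < |Z i ω| * F (Z (i - 1) ω)} ⊆
      {ω | x ^ (1 - θ) < |Z 1 ω|} ∪ {ω | x ^ (1 - θ) < |Z 2 ω|} ∪
        ({ω | x ^ θ < F (Z 0 ω)} ∩ {ω | x ^ θ < F (Z 1 ω)}) := by
    intro ω hω
    have h1 : x < |Z 1 ω| * F (Z 0 ω) := by simpa using hω 1 le_rfl (by omega)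
    have h2 : x < |Z 2 ω| * F (Z 1 ω) := by simpa using hω 2 (by norm_num) (by omega)
    by_cases hZ1 : x ^ (1 - θ) < |Z 1 ω|
    · exact Or.inl (Or.inl hZ1)
    by_cases hZ2 : x ^ (1 - θ) < |Z 2 ω|
    · exact Or.inl (Or.inr hZ2)
    exact Or.inr ⟨rpow_lt_of_lt_mul_of_le_rpow_one_sub hx (abs_nonneg _) (not_lt.1 hZ1) h1,
      rpow_lt_of_lt_mul_of_le_rpow_one_sub hx (abs_nonneg _) (not_lt.1 hZ2) h2⟩
  calc _ ≤ _ := measureReal_mono hsub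
    _ ≤ μ.real {ω | x ^ (1 - θ) < |Z 1 ω|} + μ.real {ω | x ^ (1 - θ) < |Z 2 ω|} +
          μ.real ({ω | x ^ θ < F (Z 0 ω)} ∩ {ω | x ^ θ < F (Z 1 ω)}) :=
        (measureReal_union_le _ _).trans (add_le_add_left (measureReal_union_le _ _) _)
    _ = _ := by rw [hZtail 1, hZtail 2, hindep, hFtail]; ring

end Exceedance

theorem egarch_joint_exceedances_negligible_general
    {Ω : Type*} [MeasureSpace Ω] [IsProbabilityMeasure (ℙ : Measure Ω)]
    (Z : ℤ → Ω → ℝ)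
    (hZindep : iIndepFun Z ℙ)
    (hZident : ∀ t, IdentDistrib (Z t) (Z 0) ℙ ℙ)
    (α₀ γ₀ δ₀ : ℝ)
    (φ : ℝ)
    (η : ℤ → Ω → ℝ)
    (hη : ∀ t ω, η t ω = 0.5 * (α₀ / (1 - φ) + γ₀ * Z t ω + δ₀ * |Z t ω|))
    (α : ℝ) (hα : 0 < α) (L : ℝ → ℝ) (hL : SlowlyVarying L)
    (htail : ∀ x > (0 : ℝ), (ℙ {ω | x < Real.exp (η 0 ω)}).toReal = x ^ (-α) * L x)
    (hZmom : ∀ h > (0 : ℝ), Integrable (fun ω => |Z 0 ω| ^ h) ℙ)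
    (a : ℕ → ℝ)
    (hna : Tendsto (fun n : ℕ => (n : ℝ) * (ℙ {ω | a n < Real.exp (η 0 ω)}).toReal)
      atTop (nhds 1)) :
    ∀ d : ℕ, 2 ≤ d → ∀ δ > (0 : ℝ),
      Tendsto (fun n : ℕ => (n : ℝ) *
          (ℙ {ω | ∀ i : ℤ, 1 ≤ i → i ≤ (d : ℤ) →
            δ * a n < |Z i ω| * Real.exp (η (i - 1) ω)}).toReal)
        atTop (nhds 0) := by
  intro d hd δ hδ
  obtain ⟨F, hF, hηF⟩ : ∃ F : ℝ → ℝ, Measurable F ∧ ∀ t ω, Real.exp (η t ω) = F (Z t ω) :=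
    ⟨fun z => Real.exp (0.5 * (α₀ / (1 - φ) + γ₀ * z + δ₀ * |z|)), by fun_prop,
      fun t ω => by rw [hη]⟩
  obtain ⟨T, hT⟩ : ∃ T : ℝ → ℝ, ∀ x, (ℙ {ω | x < F (Z 0 ω)}).toReal = T x := ⟨_, fun _ => rfl⟩
  simp only [hηF, hT] at htail hna ⊢
  have hT_anti : Antitone T := fun x y hxy => by
    rw [← hT, ← hT]
    exact measureReal_mono fun ω hω => hxy.trans_lt hω
  have hT_nonneg (x : ℝ) : 0 ≤ T x := hT x ▸ ENNReal.toReal_nonneg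
  have hT_pos : ∀ x > 0, 0 < T x := fun x hx => by
    rw [htail x hx]
    exact mul_pos (Real.rpow_pos_of_pos hx _) (hL.2.1 x hx)
  have hratio := hL.tendsto_div_of_eq_rpow_mul htail two_pos
  have ha : Tendsto a atTop atTop := hT_anti.tendsto_atTop_of_tendsto_natCast_mul hT_pos hna
  refine tendsto_natCast_mul_of_le_of_isLittleO hna ha
    (isLittleO_add_sq_of_rpow_bounds (θ := 3 / 4) hδ (by norm_num) (by norm_num)
      (hT_anti.isBigO_rpow_neg_of_tendsto_div hT_nonneg one_lt_two hratio
        (p := 7 / 8 * α) (by positivity) (by linarith))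
      (hT_anti.rpow_neg_isBigO_of_tendsto_div hT_nonneg one_lt_two hratio
        (β := 9 / 8 * α) (by positivity) (by linarith))
      (tail_isBigO_rpow_neg_of_integrable (m := 5 * α) (by positivity) (hZmom _ (by positivity)))
      (by linarith) (by linarith))
    (fun n => ENNReal.toReal_nonneg) ?_
  filter_upwards [ha.eventually_gt_atTop 0] with n hn
  rw [← hT]
  exact measureReal_consecutive_exceedances_le hZindep hZident hF hd _ (x := δ * a n)
    (by positivity)

theorem egarch_joint_exceedances_negligible
    {Ω : Type*} [MeasureSpace Ω] [IsProbabilityMeasure (ℙ : Measure Ω)]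
    (Z : ℤ → Ω → ℝ) (hZmeas : ∀ t, Measurable (Z t))
    (hZindep : iIndepFun Z ℙ)
    (hZident : ∀ t, IdentDistrib (Z t) (Z 0) ℙ ℙ)
    (α₀ γ₀ δ₀ : ℝ) (hα₀ : 0 < α₀) (hγ₀ : 0 < γ₀) (hδ₀ : 0 < δ₀)
    (φ : ℝ) (hφ : φ ∈ Set.Ioo (-1 : ℝ) 1)
    (η : ℤ → Ω → ℝ)
    (hη : ∀ t ω, η t ω = 0.5 * (α₀ / (1 - φ) + γ₀ * Z t ω + δ₀ * |Z t ω|))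
    (α : ℝ) (hα : 0 < α) (L : ℝ → ℝ) (hL : SlowlyVarying L)
    (htail : ∀ x > (0 : ℝ), (ℙ {ω | x < Real.exp (η 0 ω)}).toReal = x ^ (-α) * L x)
    (hZmom : ∀ h > (0 : ℝ), Integrable (fun ω => |Z 0 ω| ^ h) ℙ)
    (a : ℕ → ℝ) (ha : ∀ n, 0 < a n)
    (hna : Tendsto (fun n : ℕ => (n : ℝ) * (ℙ {ω | a n < Real.exp (η 0 ω)}).toReal)
      atTop (nhds 1)) :
    ∀ d : ℕ, 2 ≤ d → ∀ δ > (0 : ℝ),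
      Tendsto (fun n : ℕ => (n : ℝ) *
          (ℙ {ω | ∀ i : ℤ, 1 ≤ i → i ≤ (d : ℤ) →
            δ * a n < |Z i ω| * Real.exp (η (i - 1) ω)}).toReal)
        atTop (nhds 0) :=
  egarch_joint_exceedances_negligible_general Z hZindep hZident α₀ γ₀ δ₀ φ η hη α hα L hL htail
    hZmom a hna
end
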